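/- arXiv:1511.01604 — 3 statements merged into one kernel-verified Lean document; each statement's English description precedes it below -/
import Mathlib

section
/- Define u₀ = F on Γ and u₀ = Ψ₁ on Ω, and recursively u_{n+1} = T u_n. Then the sequence (u_n) is pointwise nondecreasing and uniformly bounded, hence converges pointwise to a Borel function u with Ψ₁ ≤ u ≤ Ψ₂ on Ω and u = F on Γ. -/
/-!
For `α, β ≥ 0` the operator `T` is monotone on bounded Borel functions, and `u₀ ≤ T u₀` because
`T v ≥ Ψ₁` on `Ω` and `T v = F` off `Ω`; so the iterates increase. They are bounded by the bounds
of `Ψ₁`, `Ψ₂`, `F`, hence converge pointwise to their supremum, which is Borel.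

Borel measurability has to be carried along the iteration, since the monotonicity of the ball
averages needs integrability (the Bochner average of a non-integrable function is `0`). It is
preserved by `T`: `x ↦ sup_{B_ε(x)} v` is lower and `x ↦ inf_{B_ε(x)} v` upper semicontinuous,
and `x ↦ ∫_{B_ε(x)} v` is measurable as a parametric integral of a jointly measurable integrand.
-/

open Metric MeasureTheory

open Classical in
/-- The double-obstacle min-max operator `T`. -/
noncomputable def dppOp {N : ℕ} (Ω : Set (EuclideanSpace ℝ (Fin N)))
    (Ψ₁ Ψ₂ F : EuclideanSpace ℝ (Fin N) → ℝ) (α β ε : ℝ)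
    (v : EuclideanSpace ℝ (Fin N) → ℝ) : EuclideanSpace ℝ (Fin N) → ℝ :=
  fun x => if x ∈ Ω then
      max (Ψ₁ x) (min (Ψ₂ x)
        (α / 2 * sSup (v '' ball x ε) + α / 2 * sInf (v '' ball x ε)
          + β * ⨍ y in ball x ε, v y))
    else F x

open Set

section BallExtrema

variable {E : Type*} [PseudoMetricSpace E] {v : E → ℝ} {ε : ℝ}

theorem lowerSemicontinuous_sSup_image_ball (hv : BddAbove (range v)) (hε : 0 < ε) :
    LowerSemicontinuous fun x => sSup (v '' ball x ε) := by
  intro x c hc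
  obtain ⟨_, ⟨y, hy, rfl⟩, hcy⟩ := exists_lt_of_lt_csSup ((nonempty_ball.2 hε).image v) hc
  filter_upwards [isOpen_ball.eventually_mem (mem_ball_comm.1 hy)] with x' hx'
  exact hcy.trans_le <|
    le_csSup (hv.mono (image_subset_range _ _)) ⟨y, mem_ball_comm.1 hx', rfl⟩

theorem upperSemicontinuous_sInf_image_ball (hv : BddBelow (range v)) (hε : 0 < ε) :
    UpperSemicontinuous fun x => sInf (v '' ball x ε) := by
  intro x c hc
  obtain ⟨_, ⟨y, hy, rfl⟩, hyc⟩ := exists_lt_of_csInf_lt ((nonempty_ball.2 hε).image v) hc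
  filter_upwards [isOpen_ball.eventually_mem (mem_ball_comm.1 hy)] with x' hx'
  exact (csInf_le (hv.mono (image_subset_range _ _)) ⟨y, mem_ball_comm.1 hx', rfl⟩).trans_lt hyc

end BallExtrema

section BallAverage

variable {E : Type*} [MeasurableSpace E] {v : E → ℝ}

theorem measurable_setIntegral_ball [PseudoMetricSpace E] [OpensMeasurableSpace E]
    [SecondCountableTopology E] (μ : Measure E) [SFinite μ] (hv : Measurable v) (ε : ℝ) :
    Measurable fun x => ∫ y in ball x ε, v y ∂μ := by
  have hmeas : Measurable (Function.uncurry fun x => (ball x ε).indicator v) :=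
    (hv.comp measurable_snd).indicator
      (measurableSet_lt (measurable_snd.dist measurable_fst) measurable_const)
  simpa only [integral_indicator measurableSet_ball] using
    (hmeas.stronglyMeasurable.integral_prod_right (ν := μ)).measurable

theorem measurable_setAverage_ball [NormedAddCommGroup E] [BorelSpace E]
    [SecondCountableTopology E] (μ : Measure E) [μ.IsAddHaarMeasure] [SFinite μ] (hv : Measurable v)
    (ε : ℝ) : Measurable fun x => ⨍ y in ball x ε, v y ∂μ := by
  simp only [setAverage_eq, Measure.real, Measure.addHaar_ball_center μ _ ε, smul_eq_mul]
  exact (measurable_setIntegral_ball μ hv ε).const_mul _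

end BallAverage

section DppOp

open Bornology

variable {N : ℕ} {Ω : Set (EuclideanSpace ℝ (Fin N))}
  {Ψ₁ Ψ₂ F v w : EuclideanSpace ℝ (Fin N) → ℝ} {α β ε M : ℝ} {x : EuclideanSpace ℝ (Fin N)}

theorem dppOp_of_notMem (hx : x ∉ Ω) : dppOp Ω Ψ₁ Ψ₂ F α β ε v x = F x := if_neg hx

theorem le_dppOp_of_mem (hx : x ∈ Ω) : Ψ₁ x ≤ dppOp Ω Ψ₁ Ψ₂ F α β ε v x := by
  rw [dppOp, if_pos hx]
  exact le_max_left _ _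

theorem dppOp_le_max_of_mem (hx : x ∈ Ω) :
    dppOp Ω Ψ₁ Ψ₂ F α β ε v x ≤ max (Ψ₁ x) (Ψ₂ x) := by
  rw [dppOp, if_pos hx]
  exact max_le_max le_rfl (min_le_left _ _)

theorem abs_dppOp_le (hΨ₁ : |Ψ₁ x| ≤ M) (hΨ₂ : |Ψ₂ x| ≤ M) (hF : |F x| ≤ M) :
    |dppOp Ω Ψ₁ Ψ₂ F α β ε v x| ≤ M := by
  by_cases hx : x ∈ Ω
  · rw [abs_le] at hΨ₁ hΨ₂ ⊢
    exact ⟨hΨ₁.1.trans (le_dppOp_of_mem hx),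
      (dppOp_le_max_of_mem hx).trans (max_le hΨ₁.2 hΨ₂.2)⟩
  · rwa [dppOp_of_notMem hx]

theorem measurable_dppOp (hΩ : MeasurableSet Ω) (hΨ₁ : Measurable Ψ₁) (hΨ₂ : Measurable Ψ₂)
    (hF : Measurable F) (hε : 0 < ε) (hv : Measurable v) (hvb : IsBounded (range v)) :
    Measurable (dppOp Ω Ψ₁ Ψ₂ F α β ε v) := by
  have hsup := (lowerSemicontinuous_sSup_image_ball hvb.bddAbove hε).measurable
  have hinf := (upperSemicontinuous_sInf_image_ball hvb.bddBelow hε).measurable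
  have havg := measurable_setAverage_ball volume hv ε
  exact Measurable.ite hΩ (hΨ₁.max <| hΨ₂.min <|
    ((hsup.const_mul _).add (hinf.const_mul _)).add (havg.const_mul _)) hF

theorem dppOp_mono (hα : 0 ≤ α) (hβ : 0 ≤ β) (hv : Measurable v) (hw : Measurable w)
    (hvb : IsBounded (range v)) (hwb : IsBounded (range w)) (hvw : v ≤ w) :
    dppOp Ω Ψ₁ Ψ₂ F α β ε v ≤ dppOp Ω Ψ₁ Ψ₂ F α β ε w := by
  intro x
  by_cases hx : x ∈ Ω
  swap
  · simp only [dppOp_of_notMem hx, le_rfl]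
  have hsup : sSup (v '' ball x ε) ≤ sSup (w '' ball x ε) := by
    simp only [sSup_image']
    exact ciSup_mono (hwb.bddAbove.mono (range_comp_subset_range _ w)) fun y => hvw y
  have hinf : sInf (v '' ball x ε) ≤ sInf (w '' ball x ε) := by
    simp only [sInf_image']
    exact ciInf_mono (hvb.bddBelow.mono (range_comp_subset_range _ v)) fun y => hvw y
  have hint {f : EuclideanSpace ℝ (Fin N) → ℝ} (hf : Measurable f) (hfb : IsBounded (range f)) :
      IntegrableOn f (ball x ε) := by
    obtain ⟨C, hC⟩ := hfb.exists_norm_le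
    exact Measure.integrableOn_of_bounded measure_ball_lt_top.ne hf.aestronglyMeasurable
      (ae_of_all _ fun y => hC _ (mem_range_self y))
  have havg : ⨍ y in ball x ε, v y ≤ ⨍ y in ball x ε, w y := by
    simp only [setAverage_eq, smul_eq_mul]
    exact mul_le_mul_of_nonneg_left
      (setIntegral_mono_on (hint hv hvb) (hint hw hwb) measurableSet_ball fun y _ => hvw y)
      (by positivity)
  simp only [dppOp, if_pos hx]
  gcongr

end DppOp

section DppIterate

open Bornology Classical

variable {N : ℕ} {Ω : Set (EuclideanSpace ℝ (Fin N))} {Ψ₁ Ψ₂ F : EuclideanSpace ℝ (Fin N) → ℝ}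
  {α β ε : ℝ} {u : ℕ → EuclideanSpace ℝ (Fin N) → ℝ} {x : EuclideanSpace ℝ (Fin N)}

variable (hu0 : ∀ x, u 0 x = if x ∈ Ω then Ψ₁ x else F x)
  (hrec : ∀ n, u (n + 1) = dppOp Ω Ψ₁ Ψ₂ F α β ε (u n))
include hu0 hrec

theorem dppIterate_of_notMem (hx : x ∉ Ω) (n : ℕ) : u n x = F x := by
  cases n with
  | zero => rw [hu0, if_neg hx]
  | succ n => rw [hrec, dppOp_of_notMem hx]

theorem le_dppIterate_of_mem (hx : x ∈ Ω) (n : ℕ) : Ψ₁ x ≤ u n x := by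
  cases n with
  | zero => rw [hu0, if_pos hx]
  | succ n => rw [hrec]; exact le_dppOp_of_mem hx

theorem dppIterate_le_of_mem (hx : x ∈ Ω) (hΨ : Ψ₁ x ≤ Ψ₂ x) (n : ℕ) : u n x ≤ Ψ₂ x := by
  cases n with
  | zero => rwa [hu0, if_pos hx]
  | succ n => rw [hrec]; exact (dppOp_le_max_of_mem hx).trans (max_le hΨ le_rfl)

theorem abs_dppIterate_le {M : ℝ} (hΨ₁ : ∀ x, |Ψ₁ x| ≤ M) (hΨ₂ : ∀ x, |Ψ₂ x| ≤ M)
    (hF : ∀ x, |F x| ≤ M) (n : ℕ) (x : EuclideanSpace ℝ (Fin N)) : |u n x| ≤ M := by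
  cases n with
  | zero => rw [hu0]; split_ifs; exacts [hΨ₁ x, hF x]
  | succ n => rw [hrec]; exact abs_dppOp_le (hΨ₁ x) (hΨ₂ x) (hF x)

theorem measurable_dppIterate (hΩ : MeasurableSet Ω) (hΨ₁ : Measurable Ψ₁)
    (hΨ₂ : Measurable Ψ₂) (hF : Measurable F) (hε : 0 < ε) (hb : ∀ n, IsBounded (range (u n)))
    (n : ℕ) : Measurable (u n) := by
  induction n with
  | zero => rw [funext hu0]; exact Measurable.ite hΩ hΨ₁ hF
  | succ n ih => rw [hrec]; exact measurable_dppOp hΩ hΨ₁ hΨ₂ hF hε ih (hb n)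

theorem monotone_dppIterate (hα : 0 ≤ α) (hβ : 0 ≤ β) (hm : ∀ n, Measurable (u n))
    (hb : ∀ n, IsBounded (range (u n))) : Monotone u := by
  refine monotone_nat_of_le_succ fun n => ?_
  induction n with
  | zero =>
    intro x
    by_cases hx : x ∈ Ω
    · rw [hu0, if_pos hx]; exact le_dppIterate_of_mem hu0 hrec hx 1
    · rw [dppIterate_of_notMem hu0 hrec hx, dppIterate_of_notMem hu0 hrec hx]
  | succ n ih =>
    calc u (n + 1) = dppOp Ω Ψ₁ Ψ₂ F α β ε (u n) := hrec n
      _ ≤ dppOp Ω Ψ₁ Ψ₂ F α β ε (u (n + 1)) :=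
        dppOp_mono hα hβ (hm n) (hm (n + 1)) (hb n) (hb (n + 1)) ih
      _ = u (n + 2) := (hrec (n + 1)).symm

end DppIterate

open Classical in
theorem dppOp_iteration_converges_general {N : ℕ}
    (Ω : Set (EuclideanSpace ℝ (Fin N)))
    (hΩo : IsOpen Ω) (ε₀ : ℝ)
    (Γ : Set (EuclideanSpace ℝ (Fin N)))
    (hΓ : Γ = {x | x ∉ Ω ∧ Metric.infDist x Ω < ε₀})
    (X : Set (EuclideanSpace ℝ (Fin N))) (hX : X = Ω ∪ Γ)
    (α β ε : ℝ) (hα : 0 ≤ α) (hα1 : α < 1) (hβ : β = 1 - α)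
    (hε : 0 < ε)
    (Ψ₁ Ψ₂ F : EuclideanSpace ℝ (Fin N) → ℝ)
    (hΨ₁m : Measurable Ψ₁) (hΨ₂m : Measurable Ψ₂) (hFm : Measurable F)
    (hΨ₁b : ∃ M, ∀ x, |Ψ₁ x| ≤ M) (hΨ₂b : ∃ M, ∀ x, |Ψ₂ x| ≤ M)
    (hFb : ∃ M, ∀ x, |F x| ≤ M)
    (hΨ : ∀ x ∈ X, Ψ₁ x ≤ Ψ₂ x)
    (u : ℕ → EuclideanSpace ℝ (Fin N) → ℝ)
    (hu0 : ∀ x, u 0 x = if x ∈ Ω then Ψ₁ x else F x)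
    (hrec : ∀ n, u (n + 1) = dppOp Ω Ψ₁ Ψ₂ F α β ε (u n)) :
    (∀ x ∈ X, Monotone fun n => u n x) ∧
    (∃ M : ℝ, ∀ n, ∀ x ∈ X, |u n x| ≤ M) ∧
    (∃ ulim : EuclideanSpace ℝ (Fin N) → ℝ, Measurable ulim ∧
      (∀ x ∈ X, Filter.Tendsto (fun n => u n x) Filter.atTop (nhds (ulim x))) ∧
      (∀ x ∈ Ω, Ψ₁ x ≤ ulim x ∧ ulim x ≤ Ψ₂ x) ∧
      (∀ x ∈ Γ, ulim x = F x)) := by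
  obtain ⟨M₁, hM₁⟩ := hΨ₁b
  obtain ⟨M₂, hM₂⟩ := hΨ₂b
  obtain ⟨M₃, hM₃⟩ := hFb
  set M := max M₁ (max M₂ M₃)
  have habs : ∀ n x, |u n x| ≤ M := abs_dppIterate_le hu0 hrec
    (fun x => (hM₁ x).trans (by simp [M])) (fun x => (hM₂ x).trans (by simp [M]))
    (fun x => (hM₃ x).trans (by simp [M]))
  have hb n : Bornology.IsBounded (range (u n)) :=
    isBounded_iff_forall_norm_le.2 ⟨M, forall_mem_range.2 (habs n)⟩
  have hm := measurable_dppIterate hu0 hrec hΩo.measurableSet hΨ₁m hΨ₂m hFm hε hb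
  have hmono := monotone_dppIterate hu0 hrec hα (by linarith) hm hb
  have hbdd x : BddAbove (range fun n => u n x) :=
    ⟨M, forall_mem_range.2 fun n => (abs_le.1 (habs n x)).2⟩
  refine ⟨fun x _ _ _ hmn => hmono hmn x, ⟨M, fun n x _ => habs n x⟩, fun x => ⨆ n, u n x,
    Measurable.iSup hm, fun x _ => tendsto_atTop_ciSup (fun _ _ hmn => hmono hmn x) (hbdd x),
    fun x hx => ⟨?_, ?_⟩, fun x hx => ?_⟩
  · exact (le_dppIterate_of_mem hu0 hrec hx 0).trans (le_ciSup (hbdd x) 0)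
  · exact ciSup_le (dppIterate_le_of_mem hu0 hrec hx (hΨ x (hX ▸ Or.inl hx)))
  · simp only [dppIterate_of_notMem hu0 hrec (hΓ ▸ hx).1, ciSup_const]

open Classical in
/-- the Perron iteration `u₀ = χ_Γ F + χ_Ω Ψ₁`, `u_{n+1} = T u_n`
is pointwise nondecreasing and uniformly bounded on `X`, hence converges pointwise
to a Borel function `u` with `Ψ₁ ≤ u ≤ Ψ₂` on `Ω` and `u = F` on `Γ`. -/
theorem dppOp_iteration_converges {N : ℕ}
    (Ω : Set (EuclideanSpace ℝ (Fin N)))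
    (hΩo : IsOpen Ω) (hΩb : Bornology.IsBounded Ω) (ε₀ : ℝ) (hε₀ : 0 < ε₀)
    (Γ : Set (EuclideanSpace ℝ (Fin N)))
    (hΓ : Γ = {x | x ∉ Ω ∧ Metric.infDist x Ω < ε₀})
    (X : Set (EuclideanSpace ℝ (Fin N))) (hX : X = Ω ∪ Γ)
    (α β ε : ℝ) (hα : 0 ≤ α) (hα1 : α < 1) (hβ : β = 1 - α)
    (hε : 0 < ε) (hεε₀ : ε < ε₀)
    (Ψ₁ Ψ₂ F : EuclideanSpace ℝ (Fin N) → ℝ)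
    (hΨ₁m : Measurable Ψ₁) (hΨ₂m : Measurable Ψ₂) (hFm : Measurable F)
    (hΨ₁b : ∃ M, ∀ x, |Ψ₁ x| ≤ M) (hΨ₂b : ∃ M, ∀ x, |Ψ₂ x| ≤ M)
    (hFb : ∃ M, ∀ x, |F x| ≤ M)
    (hΨ : ∀ x ∈ X, Ψ₁ x ≤ Ψ₂ x) (hF : ∀ x ∈ Γ, Ψ₁ x ≤ F x ∧ F x ≤ Ψ₂ x)
    (u : ℕ → EuclideanSpace ℝ (Fin N) → ℝ)
    (hu0 : ∀ x, u 0 x = if x ∈ Ω then Ψ₁ x else F x)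
    (hrec : ∀ n, u (n + 1) = dppOp Ω Ψ₁ Ψ₂ F α β ε (u n)) :
    (∀ x ∈ X, Monotone fun n => u n x) ∧
    (∃ M : ℝ, ∀ n, ∀ x ∈ X, |u n x| ≤ M) ∧
    (∃ ulim : EuclideanSpace ℝ (Fin N) → ℝ, Measurable ulim ∧
      (∀ x ∈ X, Filter.Tendsto (fun n => u n x) Filter.atTop (nhds (ulim x))) ∧
      (∀ x ∈ Ω, Ψ₁ x ≤ ulim x ∧ ulim x ≤ Ψ₂ x) ∧
      (∀ x ∈ Γ, ulim x = F x)) :=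
  dppOp_iteration_converges_general Ω hΩo ε₀ Γ hΓ X hX α β ε hα hα1 hβ hε Ψ₁ Ψ₂ F hΨ₁m hΨ₂m hFm hΨ₁b
    hΨ₂b hFb hΨ u hu0 hrec
end

section
/- Fix ε < ε₀ and α ∈ [0,1), β = 1−α. If u and ū are two bounded Borel functions both satisfying the dynamic programming equation (u = Tu and ū = Tū with the same data F, Ψ₁, Ψ₂), and M = sup_X (u − ū) > 0 is attained in the density sense on a ball B_ε(x₀), then the set G = {x ∈ X : (u−ū)(x) = M} satisfies: for every x ∈ G ∩ Ω, the set B_ε(x) \ G has Lebesgue measure zero. -/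
open Metric MeasureTheory

/-!
At a point `x ∈ G ∩ Ω`, subtracting the dynamic programming equations for `u` and `ū` and using
that the obstacle clipping `c ↦ max Ψ₁ (min Ψ₂ c)` is monotone and 1-Lipschitz gives
`M ≤ α M + β ⨍_{B_ε(x)} (u - ū)`, because the sup and inf terms of `u` and `ū` differ by at
most `M`. As `β > 0` this forces `⨍_{B_ε(x)} (u - ū) ≥ M`, while `u - ū ≤ M` on `B_ε(x) ⊆ X`;
hence `u - ū = M` almost everywhere on the ball.
-/

lemma max_min_sub_max_min_le (a b c c' : ℝ) :
    max a (min b c) - max a (min b c') ≤ max 0 (c - c') := by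
  grind

section ImageBounds

variable {ι : Type*} {s : Set ι} {f g : ι → ℝ} {M : ℝ}

lemma csSup_image_le_csSup_image_add (hs : s.Nonempty) (hg : BddAbove (g '' s))
    (hfg : ∀ y ∈ s, f y ≤ g y + M) : sSup (f '' s) ≤ sSup (g '' s) + M :=
  csSup_le (hs.image f) <| Set.forall_mem_image.2 fun y hy =>
    (hfg y hy).trans (add_le_add_left (le_csSup hg (Set.mem_image_of_mem g hy)) M)

lemma csInf_image_le_csInf_image_add (hs : s.Nonempty) (hf : BddBelow (f '' s))
    (hfg : ∀ y ∈ s, f y ≤ g y + M) : sInf (f '' s) ≤ sInf (g '' s) + M :=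
  sub_le_iff_le_add.1 <| le_csInf (hs.image g) <| Set.forall_mem_image.2 fun y hy => by
    linarith [hfg y hy, csInf_le hf (Set.mem_image_of_mem f hy)]

end ImageBounds

section Average

variable {α : Type*} [MeasurableSpace α] {μ : Measure α} {s : Set α} {f g : α → ℝ}

lemma setAverage_sub (hf : IntegrableOn f s μ) (hg : IntegrableOn g s μ) :
    ⨍ y in s, (f y - g y) ∂μ = ⨍ y in s, f y ∂μ - ⨍ y in s, g y ∂μ :=
  integral_sub hf.to_average hg.to_average

lemma ae_restrict_eq_of_le_of_le_setAverage {M : ℝ} (hs : μ s ≠ ⊤) (hf : IntegrableOn f s μ)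
    (hle : ∀ᵐ y ∂μ.restrict s, f y ≤ M) (havg : M ≤ ⨍ y in s, f y ∂μ) :
    ∀ᵐ y ∂μ.restrict s, f y = M := by
  set A := ⨍ y in s, f y ∂μ
  have hgap_nonneg : 0 ≤ᵐ[μ.restrict s] fun y => A - f y := by
    filter_upwards [hle] with y hy
    exact sub_nonneg.2 (hy.trans havg)
  have hgap_int : Integrable (fun y => A - f y) (μ.restrict s) :=
    (integrableOn_const hs).sub hf
  have hf_eq_avg : ∀ᵐ y ∂μ.restrict s, f y = A := by
    filter_upwards [(integral_eq_zero_iff_of_nonneg_ae hgap_nonneg hgap_int).1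
      (setIntegral_setAverage_sub hs hf)] with y hy
    exact (sub_eq_zero.1 hy).symm
  rcases eq_zero_or_neZero (μ.restrict s) with h0 | _
  · simp [h0]
  obtain ⟨y, hyA, hyM⟩ := (hf_eq_avg.and hle).exists
  filter_upwards [hf_eq_avg] with z hz
  linarith

end Average

section Operator

variable {N : ℕ} {Ω : Set (EuclideanSpace ℝ (Fin N))} {Ψ₁ Ψ₂ F : EuclideanSpace ℝ (Fin N) → ℝ}
  {α β ε : ℝ} {u v : EuclideanSpace ℝ (Fin N) → ℝ} {x : EuclideanSpace ℝ (Fin N)} {M : ℝ}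

lemma dppOp_sub_dppOp_le (hx : x ∈ Ω) (hα : 0 ≤ α) (hε : 0 < ε)
    (hu : Bornology.IsBounded (Set.range u)) (hv : Bornology.IsBounded (Set.range v))
    (hle : ∀ y ∈ ball x ε, u y - v y ≤ M) :
    dppOp Ω Ψ₁ Ψ₂ F α β ε u x - dppOp Ω Ψ₁ Ψ₂ F α β ε v x ≤
      max 0 (α * M + β * ((⨍ y in ball x ε, u y) - ⨍ y in ball x ε, v y)) := by
  have hle' : ∀ y ∈ ball x ε, u y ≤ v y + M := fun y hy => by linarith [hle y hy]
  have hsup := csSup_image_le_csSup_image_add (nonempty_ball.2 hε)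
    (hv.bddAbove.mono (Set.image_subset_range _ _)) hle'
  have hinf := csInf_image_le_csInf_image_add (nonempty_ball.2 hε)
    (hu.bddBelow.mono (Set.image_subset_range _ _)) hle'
  simp only [dppOp, if_pos hx]
  refine (max_min_sub_max_min_le _ _ _ _).trans (max_le_max le_rfl ?_)
  linarith [mul_le_mul_of_nonneg_left hsup hα, mul_le_mul_of_nonneg_left hinf hα]

end Operator

lemma ball_subset_union_infDist_lt {E : Type*} [PseudoMetricSpace E] {Ω : Set E} {x : E}
    {ε ε₀ : ℝ} (hx : x ∈ Ω) (hεε₀ : ε < ε₀) :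
    ball x ε ⊆ Ω ∪ {y | y ∉ Ω ∧ infDist y Ω < ε₀} := by
  intro y hy
  by_cases hyΩ : y ∈ Ω
  · exact Or.inl hyΩ
  · exact Or.inr ⟨hyΩ, (infDist_le_dist_of_mem hx).trans_lt ((mem_ball.1 hy).trans hεε₀)⟩

lemma isBounded_range_of_abs_le {ι : Type*} {f : ι → ℝ} {C : ℝ} (hC : ∀ x, |f x| ≤ C) :
    Bornology.IsBounded (Set.range f) :=
  isBounded_iff_forall_norm_le.2 ⟨C, Set.forall_mem_range.2 hC⟩

theorem dppOp_max_set_propagation_general {N : ℕ}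
    (Ω : Set (EuclideanSpace ℝ (Fin N)))
    (ε₀ : ℝ)
    (Γ : Set (EuclideanSpace ℝ (Fin N)))
    (hΓ : Γ = {x | x ∉ Ω ∧ Metric.infDist x Ω < ε₀})
    (X : Set (EuclideanSpace ℝ (Fin N))) (hX : X = Ω ∪ Γ)
    (α β ε : ℝ) (hα : 0 ≤ α) (hα1 : α < 1) (hβ : β = 1 - α)
    (hε : 0 < ε) (hεε₀ : ε < ε₀)
    (Ψ₁ Ψ₂ F : EuclideanSpace ℝ (Fin N) → ℝ)
    (u ub : EuclideanSpace ℝ (Fin N) → ℝ)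
    (hum : Measurable u) (hubm : Measurable ub)
    (hub : ∃ M, ∀ x, |u x| ≤ M) (hubb : ∃ M, ∀ x, |ub x| ≤ M)
    (hu : ∀ x ∈ X, u x = dppOp Ω Ψ₁ Ψ₂ F α β ε u x)
    (hub' : ∀ x ∈ X, ub x = dppOp Ω Ψ₁ Ψ₂ F α β ε ub x)
    (M : ℝ) (hM : M = sSup ((fun x => u x - ub x) '' X)) (hMpos : 0 < M)
    (G : Set (EuclideanSpace ℝ (Fin N))) (hG : G = {x ∈ X | u x - ub x = M}) :
    ∀ x ∈ G ∩ Ω, volume (ball x ε \ G) = 0 := by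
  obtain ⟨Cu, hCu⟩ := hub
  obtain ⟨Cub, hCub⟩ := hubb
  have hu_bdd := isBounded_range_of_abs_le hCu
  have hub_bdd := isBounded_range_of_abs_le hCub
  have hdiff_bdd := isBounded_range_of_abs_le fun z =>
    (abs_sub (u z) (ub z)).trans (add_le_add (hCu z) (hCub z))
  have hle_M : ∀ y ∈ X, u y - ub y ≤ M := fun y hy => hM ▸
    le_csSup (hdiff_bdd.bddAbove.mono (Set.image_subset_range _ _)) ⟨y, hy, rfl⟩
  rintro x ⟨hxG, hxΩ⟩
  rw [hG] at hxG ⊢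
  have hBX : ball x ε ⊆ X := hX ▸ hΓ ▸ ball_subset_union_infDist_lt hxΩ hεε₀
  have hu_int : IntegrableOn u (ball x ε) := Measure.integrableOn_of_bounded
    measure_ball_lt_top.ne hum.aestronglyMeasurable (ae_of_all _ hCu)
  have hub_int : IntegrableOn ub (ball x ε) := Measure.integrableOn_of_bounded
    measure_ball_lt_top.ne hubm.aestronglyMeasurable (ae_of_all _ hCub)
  have hM_le : M ≤ max 0 (α * M + β * ⨍ y in ball x ε, (u y - ub y)) := by
    have key := dppOp_sub_dppOp_le (Ψ₁ := Ψ₁) (Ψ₂ := Ψ₂) (F := F) (β := β) hxΩ hα hε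
      hu_bdd hub_bdd fun y hy => hle_M y (hBX hy)
    rwa [← hu x hxG.1, ← hub' x hxG.1, hxG.2, ← setAverage_sub hu_int hub_int] at key
  have hM_le_avg : M ≤ ⨍ y in ball x ε, (u y - ub y) := by
    have hM_le' := (le_max_iff.1 hM_le).resolve_left hMpos.not_ge
    refine le_of_mul_le_mul_left (a := β) ?_ (by linarith)
    rw [hβ] at hM_le' ⊢
    linarith
  have hae := ae_restrict_eq_of_le_of_le_setAverage measure_ball_lt_top.ne
    (hu_int.sub hub_int)
    ((ae_restrict_iff' measurableSet_ball).2 (ae_of_all _ fun y hy => hle_M y (hBX hy)))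
    hM_le_avg
  rw [ae_restrict_iff' measurableSet_ball, ae_iff] at hae
  refine measure_mono_null ?_ hae
  rintro y ⟨hy, hyG⟩ hyM
  exact hyG ⟨hBX hy, hyM hy⟩

/-- propagation of the supremum set in the uniqueness proof for `u = Tu`:
if `M = sup_X (u - ū) > 0` is attained in the density sense on a ball `B_ε(x₀)`,
then for every `x ∈ G ∩ Ω` the set `B_ε(x) \ G` has Lebesgue measure zero, where
`G = {x ∈ X : (u - ū)(x) = M}`. -/
theorem dppOp_max_set_propagation {N : ℕ}
    (Ω : Set (EuclideanSpace ℝ (Fin N)))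
    (hΩo : IsOpen Ω) (hΩb : Bornology.IsBounded Ω) (ε₀ : ℝ) (hε₀ : 0 < ε₀)
    (Γ : Set (EuclideanSpace ℝ (Fin N)))
    (hΓ : Γ = {x | x ∉ Ω ∧ Metric.infDist x Ω < ε₀})
    (X : Set (EuclideanSpace ℝ (Fin N))) (hX : X = Ω ∪ Γ)
    (α β ε : ℝ) (hα : 0 ≤ α) (hα1 : α < 1) (hβ : β = 1 - α)
    (hε : 0 < ε) (hεε₀ : ε < ε₀)
    (Ψ₁ Ψ₂ F : EuclideanSpace ℝ (Fin N) → ℝ)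
    (hΨ₁m : Measurable Ψ₁) (hΨ₂m : Measurable Ψ₂) (hFm : Measurable F)
    (hΨ₁b : ∃ M, ∀ x, |Ψ₁ x| ≤ M) (hΨ₂b : ∃ M, ∀ x, |Ψ₂ x| ≤ M)
    (hFb : ∃ M, ∀ x, |F x| ≤ M)
    (hΨ : ∀ x ∈ X, Ψ₁ x ≤ Ψ₂ x) (hF : ∀ x ∈ Γ, Ψ₁ x ≤ F x ∧ F x ≤ Ψ₂ x)
    (u ub : EuclideanSpace ℝ (Fin N) → ℝ)
    (hum : Measurable u) (hubm : Measurable ub)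
    (hub : ∃ M, ∀ x, |u x| ≤ M) (hubb : ∃ M, ∀ x, |ub x| ≤ M)
    (hu : ∀ x ∈ X, u x = dppOp Ω Ψ₁ Ψ₂ F α β ε u x)
    (hub' : ∀ x ∈ X, ub x = dppOp Ω Ψ₁ Ψ₂ F α β ε ub x)
    (M : ℝ) (hM : M = sSup ((fun x => u x - ub x) '' X)) (hMpos : 0 < M)
    (x₀ : EuclideanSpace ℝ (Fin N)) (hx₀ : x₀ ∈ closure Ω)
    (hdens : M ≤ ⨍ y in ball x₀ ε, (u y - ub y))
    (G : Set (EuclideanSpace ℝ (Fin N))) (hG : G = {x ∈ X | u x - ub x = M}) :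
    ∀ x ∈ G ∩ Ω, volume (ball x ε \ G) = 0 :=
  dppOp_max_set_propagation_general Ω ε₀ Γ hΓ X hX α β ε hα hα1 hβ hε hεε₀ Ψ₁ Ψ₂ F u ub hum hubm hub
    hubb hu hub' M hM hMpos G hG
end

section
/- Supermartingale step in the game: let u solve the min-max dynamic programming principle, let σ_II be a Markovian strategy with u(σ_II^n(x)) ≤ inf_{B_ε(x)} u + η/2^{n+1}, and let the game not yet be stopped at step n−1, i.e. u(x_{n−1}) < Ψ₂(x_{n−1}) and x_{n−1} ∈ Ω. Then for any strategy σ_I of Player I, the conditional expectation satisfies E[u∘x_n + η/2^n | F_{n−1}](x₀,…,x_{n−1}) ≤ u(x_{n−1}) + η/2^{n−1}; i.e. the single transition step decreases u∘x_n + η/2^n in conditional expectation. -/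
open Metric MeasureTheory

/-- the supermartingale transition step. If `u` solves the min-max
dynamic programming principle, the game is not yet stopped at step `n-1`
(`u(x_{n-1}) < Ψ₂(x_{n-1})`, `x_{n-1} ∈ Ω`), Player II plays an `η/2^{n+1}`-optimal
Markovian move `b`, and Player I plays any move `a ∈ B_ε(x_{n-1})`, then the one-step
conditional expectation of `u∘x_n + η/2^n` is at most `u(x_{n-1}) + η/2^{n-1}`. -/
theorem dppOp_supermartingale_step {N : ℕ}
    (Ω : Set (EuclideanSpace ℝ (Fin N)))
    (hΩo : IsOpen Ω) (hΩb : Bornology.IsBounded Ω) (ε₀ : ℝ) (hε₀ : 0 < ε₀)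
    (Γ : Set (EuclideanSpace ℝ (Fin N)))
    (hΓ : Γ = {x | x ∉ Ω ∧ Metric.infDist x Ω < ε₀})
    (X : Set (EuclideanSpace ℝ (Fin N))) (hX : X = Ω ∪ Γ)
    (α β ε : ℝ) (hα : 0 ≤ α) (hα1 : α < 1) (hβ : β = 1 - α)
    (hε : 0 < ε) (hεε₀ : ε < ε₀)
    (Ψ₁ Ψ₂ F : EuclideanSpace ℝ (Fin N) → ℝ)
    (hΨ₁m : Measurable Ψ₁) (hΨ₂m : Measurable Ψ₂) (hFm : Measurable F)
    (hΨ₁b : ∃ M, ∀ x, |Ψ₁ x| ≤ M) (hΨ₂b : ∃ M, ∀ x, |Ψ₂ x| ≤ M)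
    (hFb : ∃ M, ∀ x, |F x| ≤ M)
    (hΨ : ∀ x ∈ X, Ψ₁ x ≤ Ψ₂ x) (hF : ∀ x ∈ Γ, Ψ₁ x ≤ F x ∧ F x ≤ Ψ₂ x)
    (u : EuclideanSpace ℝ (Fin N) → ℝ)
    (hum : Measurable u) (hub : ∃ M, ∀ x, |u x| ≤ M)
    (hu : ∀ x ∈ X, u x = dppOp Ω Ψ₁ Ψ₂ F α β ε u x)
    (n : ℕ) (hn : 1 ≤ n) (η : ℝ) (hη : 0 < η)
    (x : EuclideanSpace ℝ (Fin N)) (hx : x ∈ Ω) (hstop : u x < Ψ₂ x)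
    (a b : EuclideanSpace ℝ (Fin N)) (ha : a ∈ ball x ε) (hb : b ∈ ball x ε)
    (hbopt : u b ≤ sInf (u '' ball x ε) + η / 2 ^ (n + 1)) :
    α / 2 * u a + α / 2 * u b + β * (⨍ y in ball x ε, u y) + η / 2 ^ n
      ≤ u x + η / 2 ^ (n - 1) := by
  obtain ⟨M, hM⟩ := hub
  have hxX : x ∈ X := by rw [hX]; exact Or.inl hx
  have hux := hu x hxX
  unfold dppOp at hux
  rw [if_pos hx] at hux
  set S := sSup (u '' ball x ε) with hS
  set I := sInf (u '' ball x ε) with hI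
  set A := ⨍ y in ball x ε, u y with hA
  have hT : α / 2 * S + α / 2 * I + β * A ≤ u x := by
    rcases le_total (α / 2 * S + α / 2 * I + β * A) (Ψ₂ x) with h | h
    · rw [hux]; rw [min_eq_right h]; exact le_max_right _ _
    · exfalso
      have : Ψ₂ x ≤ u x := by
        rw [hux, min_eq_left h]; exact le_max_right _ _
      linarith
  have hbdd : BddAbove (u '' ball x ε) := ⟨M, fun y ⟨z, _, hz⟩ => hz ▸ (abs_le.mp (hM z)).2⟩
  have haS : u a ≤ S := le_csSup hbdd ⟨a, ha, rfl⟩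
  have hα2 : 0 ≤ α / 2 := by linarith
  have h1 : α / 2 * u a ≤ α / 2 * S := mul_le_mul_of_nonneg_left haS hα2
  have h2 : α / 2 * u b ≤ α / 2 * (I + η / 2 ^ (n + 1)) := mul_le_mul_of_nonneg_left hbopt hα2
  obtain ⟨m, rfl⟩ : ∃ m, n = m + 1 := ⟨n - 1, (Nat.succ_pred_eq_of_pos hn).symm⟩
  have hpm : (0:ℝ) < 2 ^ m := by positivity
  have key : α / 2 * (η / 2 ^ (m + 1 + 1)) + η / 2 ^ (m + 1) ≤ η / 2 ^ (m + 1 - 1) := by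
    simp only [Nat.add_sub_cancel, pow_succ]
    have e1 : η / (2 ^ m * 2 * 2) = η / 2 ^ m / 4 := by ring
    have e2 : η / (2 ^ m * 2) = η / 2 ^ m / 2 := by ring
    rw [e1, e2]
    have ht : 0 < η / 2 ^ m := by positivity
    nlinarith [ht]
  nlinarith [key, hT, h1, h2]
end
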